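/- Let k be a nontrivial commutative ring. There exists a functor F : B̃ ⥤ ModuleCat k such that F sends the morphism a → c to an isomorphism, yet the canonical colimit coprojection F(d) → colim F is not an isomorphism. (For instance F(a) = F(b) = F(c) = F(d) = k with F(a→c) = F(a→d) = F(b→c) = id and F(b→d) = 0 works. This computation is the reason why the quotient functor v : B̃ → B_{a∼c}, which freely inverts the arrow a → c, is not a homotopical epimorphism: an isomorphism in a coherent diagram cannot in general be lifted to the incoherent one.) -/

import Mathlib

/-!
The counterexample showing that the quotient functor `v : B̃ → B_{a∼c}` is not a
homotopical epimorphism: there is a diagram `F : B̃ ⥤ ModuleCat k` in which the arrow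
`a → c` is sent to an isomorphism but the colimit coprojection at `d` is not an
isomorphism.
-/

open CategoryTheory CategoryTheory.Limits

/-- The poset `B̃` with elements `a, b, c, d` and order generated by
`a < c`, `a < d`, `b < c`, `b < d`. -/
inductive Bt : Type
  | a | b | c | d
deriving DecidableEq

namespace Bt

/-- The order relation of `B̃`. -/
def le : Bt → Bt → Prop :=
  fun x y => x = y ∨ ((x = Bt.a ∨ x = Bt.b) ∧ (y = Bt.c ∨ y = Bt.d))

instance : PartialOrder Bt where
  le := Bt.le
  le_refl x := Or.inl rfl
  le_trans x y z h1 h2 := by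
    rcases h1 with h1 | h1
    · subst h1; exact h2
    · rcases h2 with h2 | h2
      · subst h2; exact Or.inr h1
      · exact Or.inr ⟨h1.1, h2.2⟩
  le_antisymm x y h1 h2 := by
    rcases h1 with h1 | h1
    · exact h1
    · rcases h2 with h2 | h2
      · exact h2.symm
      · rcases h1.2 with h | h <;> rcases h2.1 with h' | h' <;> subst h <;> cases h'

theorem a_le_c : Bt.a ≤ Bt.c := Or.inr ⟨Or.inl rfl, Or.inl rfl⟩

theorem a_le_d : Bt.a ≤ Bt.d := Or.inr ⟨Or.inl rfl, Or.inr rfl⟩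
theorem b_le_c : Bt.b ≤ Bt.c := Or.inr ⟨Or.inr rfl, Or.inl rfl⟩
theorem b_le_d : Bt.b ≤ Bt.d := Or.inr ⟨Or.inr rfl, Or.inr rfl⟩

instance : DecidableRel ((· ≤ ·) : Bt → Bt → Prop) :=
  fun x y => inferInstanceAs (Decidable (x = y ∨ _))

end Bt

/-- The counterexample diagram: all objects are `k`, `b → d` goes to `0`,
all other arrows go to the identity. -/
def Fdiag.{v} (k : Type) [CommRing k] : Bt ⥤ ModuleCat.{v} k where
  obj _ := ModuleCat.of k (ULift k)
  map {x y} _ := if x = Bt.b ∧ y = Bt.d then 0 else 𝟙 (ModuleCat.of k (ULift k))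
  map_id x := by cases x <;> simp
  map_comp {x y z} f g := by
    cases x <;> cases y <;> cases z <;>
      first
        | exact absurd (leOfHom f) (by decide)
        | exact absurd (leOfHom g) (by decide)
        | simp

theorem Fdiag.map_ac_iso.{v} (k : Type) [CommRing k] :
    IsIso ((Fdiag.{v} k).map (homOfLE Bt.a_le_c)) := by
  have : (Fdiag.{v} k).map (homOfLE Bt.a_le_c) = 𝟙 (ModuleCat.of k (ULift k)) := by
    simp [Fdiag]
  rw [this]; exact IsIso.id _

theorem Fdiag.not_iso_colimit_ι.{v} (k : Type) [CommRing k] [Nontrivial k] :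
    ¬ IsIso (colimit.ι (Fdiag.{v} k) Bt.d) := by
  intro h
  haveI := h
  have hb : colimit.ι (Fdiag.{v} k) Bt.b = 0 := by
    rw [← colimit.w (Fdiag.{v} k) (homOfLE Bt.b_le_d)]
    have : (Fdiag.{v} k).map (homOfLE Bt.b_le_d) = 0 := by simp [Fdiag]; rfl
    rw [this, zero_comp]
  have hc : colimit.ι (Fdiag.{v} k) Bt.c = 0 := by
    have hw := colimit.w (Fdiag.{v} k) (homOfLE Bt.b_le_c)
    have hm : (Fdiag.{v} k).map (homOfLE Bt.b_le_c) = 𝟙 _ := by simp [Fdiag]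
    rw [hm] at hw
    replace hw := (Category.id_comp (X := (Fdiag.{v} k).obj Bt.b) _).symm.trans hw
    rw [hw, hb]; rfl
  have hd : colimit.ι (Fdiag.{v} k) Bt.d = 0 := by
    have h1 := colimit.w (Fdiag.{v} k) (homOfLE Bt.a_le_d)
    have h2 := colimit.w (Fdiag.{v} k) (homOfLE Bt.a_le_c)
    have hm1 : (Fdiag.{v} k).map (homOfLE Bt.a_le_d) = 𝟙 _ := by simp [Fdiag]
    have hm2 : (Fdiag.{v} k).map (homOfLE Bt.a_le_c) = 𝟙 _ := by simp [Fdiag]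
    rw [hm1] at h1
    replace h1 := (Category.id_comp (X := (Fdiag.{v} k).obj Bt.a) _).symm.trans h1
    rw [hm2] at h2
    replace h2 := (Category.id_comp (X := (Fdiag.{v} k).obj Bt.a) _).symm.trans h2
    rw [h1, ← h2, hc]; rfl
  have hid : 𝟙 ((Fdiag.{v} k).obj Bt.d) =
      colimit.ι (Fdiag.{v} k) Bt.d ≫ inv (colimit.ι (Fdiag.{v} k) Bt.d) :=
    (IsIso.hom_inv_id _).symm
  simp only [hd, zero_comp] at hid
  have h1 := LinearMap.congr_fun (congrArg ModuleCat.Hom.hom hid) (ULift.up (1 : k))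
  simp at h1
  have : (1 : k) = 0 := congrArg ULift.down h1
  exact one_ne_zero this

/-- For any nontrivial commutative ring `k`, there is a functor `F : B̃ ⥤ ModuleCat k`
sending the morphism `a → c` to an isomorphism, but for which the canonical colimit
coprojection `F(d) → colim F` is not an isomorphism.  (Hence an isomorphism inside a
coherent diagram cannot in general be lifted to the incoherent one, and `v : B̃ → B_{a∼c}`
is not a homotopical epimorphism.) -/
theorem exists_diagram_iso_not_lifting (k : Type) [CommRing k] [Nontrivial k] :
    ∃ F : Bt ⥤ ModuleCat k,
      IsIso (F.map (homOfLE Bt.a_le_c)) ∧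
      ¬ IsIso (colimit.ι F Bt.d) :=
  ⟨Fdiag k, Fdiag.map_ac_iso k, Fdiag.not_iso_colimit_ι k⟩
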